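/- Dilution achievability under CPTP_A: let ρ₀, ρ₁ be density matrices and M > 1 a real number with ρ₀ ≤ (2M−1)ρ₁ and ρ₁ ≤ (2M−1)ρ₀. Define ρ̃₀ = ((2M−1)ρ₀ − ρ₁)/(2M−2) and ρ̃₁ = ((2M−1)ρ₁ − ρ₀)/(2M−2), which are density matrices, and the channel E(ω) = ⟨0|ω|0⟩ ρ̃₀ + ⟨1|ω|1⟩ ρ̃₁ on qubit inputs. Then E(π_M) = ρ₀ and E(σ_x π_M σ_x) = ρ₁. -/

import Mathlib

/-!
The channel only reads the diagonal of its input. `π_M` has diagonal `(1 − 1/(2M), 1/(2M))` and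
conjugation by `σ_x` swaps the two entries, so both output identities reduce to the linear identity
`(1 − 1/(2M)) ρ̃₀ + (1/(2M)) ρ̃₁ = ρ₀` and its mirror image. Positivity of `ρ̃ᵢ` is the Loewner
hypothesis rescaled by `(2M − 2)⁻¹ ≥ 0`.
-/

open Matrix
open scoped ComplexOrder

/-- The golden-unit qubit state `π_M = (1−1/(2M))|0⟩⟨0| + (1/(2M))|1⟩⟨1|`. -/
noncomputable def piM (M : ℝ) : Matrix (Fin 2) (Fin 2) ℂ :=
  !![((1 - 1 / (2 * M) : ℝ) : ℂ), 0; 0, ((1 / (2 * M) : ℝ) : ℂ)]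

/-- The Pauli-x matrix. -/
def sigmaX : Matrix (Fin 2) (Fin 2) ℂ := !![0, 1; 1, 0]

/-- `ρ̃₀ = ((2M−1)ρ₀ − ρ₁)/(2M−2)`. -/
noncomputable def rhoTilde {d : ℕ} (M : ℝ) (ρ₀ ρ₁ : Matrix (Fin d) (Fin d) ℂ) :
    Matrix (Fin d) (Fin d) ℂ :=
  (2 * M - 2)⁻¹ • ((2 * M - 1) • ρ₀ - ρ₁)

/-- The measure-and-prepare channel `E(ω) = ⟨0|ω|0⟩ ρ̃₀ + ⟨1|ω|1⟩ ρ̃₁` on qubit inputs. -/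
noncomputable def dilutionChannel {d : ℕ} (ρt₀ ρt₁ : Matrix (Fin d) (Fin d) ℂ)
    (ω : Matrix (Fin 2) (Fin 2) ℂ) : Matrix (Fin d) (Fin d) ℂ :=
  ω 0 0 • ρt₀ + ω 1 1 • ρt₁

section

variable {d : ℕ} {M : ℝ} {A B : Matrix (Fin d) (Fin d) ℂ}

theorem rhoTilde_posSemidef (hM : 1 ≤ M) (h : ((2 * M - 1) • A - B).PosSemidef) :
    (rhoTilde M A B).PosSemidef :=
  h.smul (inv_nonneg.2 (by linarith))

theorem trace_rhoTilde (hM : M ≠ 1) (hA : A.trace = 1) (hB : B.trace = 1) :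
    (rhoTilde M A B).trace = 1 := by
  have : (M : ℂ) - 1 ≠ 0 := sub_ne_zero.2 (by exact_mod_cast hM)
  rw [rhoTilde, trace_smul, trace_sub, trace_smul, hA, hB]
  simp only [Complex.real_smul, Complex.ofReal_inv]
  push_cast
  field_simp
  ring

theorem rhoTilde_convex_combination (hM₀ : M ≠ 0) (hM₁ : M ≠ 1) :
    (1 - 1 / (2 * M)) • rhoTilde M A B + (1 / (2 * M)) • rhoTilde M B A = A := by
  have : M - 1 ≠ 0 := sub_ne_zero.2 hM₁
  simp only [rhoTilde]
  match_scalars <;> field_simp <;> ring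

theorem sigmaX_mul_piM_mul_sigmaX :
    sigmaX * piM M * sigmaX = !![((1 / (2 * M) : ℝ) : ℂ), 0; 0, ((1 - 1 / (2 * M) : ℝ) : ℂ)] := by
  ext i j; fin_cases i <;> fin_cases j <;> simp [sigmaX, piM, Matrix.mul_apply, Fin.sum_univ_two]

theorem dilutionChannel_diagonal (p q : ℝ) (X Y : Matrix (Fin d) (Fin d) ℂ) :
    dilutionChannel X Y !![(p : ℂ), 0; 0, (q : ℂ)] = p • X + q • Y := by
  simp [dilutionChannel, Complex.coe_smul]

end

theorem dilution_achievability_general {d : ℕ} (M : ℝ) (hM : 1 < M)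
    (ρ₀ ρ₁ : Matrix (Fin d) (Fin d) ℂ)
    (h₀t : ρ₀.trace = 1)
    (h₁t : ρ₁.trace = 1)
    (hL₀ : ((2 * M - 1) • ρ₁ - ρ₀).PosSemidef)
    (hL₁ : ((2 * M - 1) • ρ₀ - ρ₁).PosSemidef) :
    (rhoTilde M ρ₀ ρ₁).PosSemidef ∧ (rhoTilde M ρ₀ ρ₁).trace = 1 ∧
    (rhoTilde M ρ₁ ρ₀).PosSemidef ∧ (rhoTilde M ρ₁ ρ₀).trace = 1 ∧
    dilutionChannel (rhoTilde M ρ₀ ρ₁) (rhoTilde M ρ₁ ρ₀) (piM M) = ρ₀ ∧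
    dilutionChannel (rhoTilde M ρ₀ ρ₁) (rhoTilde M ρ₁ ρ₀) (sigmaX * piM M * sigmaX) = ρ₁ := by
  have hM₀ : M ≠ 0 := by positivity
  refine ⟨rhoTilde_posSemidef hM.le hL₁, trace_rhoTilde hM.ne' h₀t h₁t,
    rhoTilde_posSemidef hM.le hL₀, trace_rhoTilde hM.ne' h₁t h₀t, ?_, ?_⟩
  · rw [piM, dilutionChannel_diagonal, rhoTilde_convex_combination hM₀ hM.ne']
  · rw [sigmaX_mul_piM_mul_sigmaX, dilutionChannel_diagonal, add_comm,
      rhoTilde_convex_combination hM₀ hM.ne']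

/-- Dilution achievability under `CPTP_A`: if `M > 1`, `ρ₀ ≤ (2M−1)ρ₁` and
`ρ₁ ≤ (2M−1)ρ₀`, then `ρ̃₀ = ((2M−1)ρ₀−ρ₁)/(2M−2)` and `ρ̃₁ = ((2M−1)ρ₁−ρ₀)/(2M−2)` are
density matrices, and the channel `E(ω) = ⟨0|ω|0⟩ρ̃₀ + ⟨1|ω|1⟩ρ̃₁` satisfies
`E(π_M) = ρ₀` and `E(σ_x π_M σ_x) = ρ₁`. -/
theorem dilution_achievability {d : ℕ} (M : ℝ) (hM : 1 < M)
    (ρ₀ ρ₁ : Matrix (Fin d) (Fin d) ℂ)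
    (h₀ : ρ₀.PosSemidef) (h₀t : ρ₀.trace = 1)
    (h₁ : ρ₁.PosSemidef) (h₁t : ρ₁.trace = 1)
    (hL₀ : ((2 * M - 1) • ρ₁ - ρ₀).PosSemidef)
    (hL₁ : ((2 * M - 1) • ρ₀ - ρ₁).PosSemidef) :
    (rhoTilde M ρ₀ ρ₁).PosSemidef ∧ (rhoTilde M ρ₀ ρ₁).trace = 1 ∧
    (rhoTilde M ρ₁ ρ₀).PosSemidef ∧ (rhoTilde M ρ₁ ρ₀).trace = 1 ∧
    dilutionChannel (rhoTilde M ρ₀ ρ₁) (rhoTilde M ρ₁ ρ₀) (piM M) = ρ₀ ∧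
    dilutionChannel (rhoTilde M ρ₀ ρ₁) (rhoTilde M ρ₁ ρ₀) (sigmaX * piM M * sigmaX) = ρ₁ :=
  dilution_achievability_general M hM ρ₀ ρ₁ h₀t h₁t hL₀ hL₁
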